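/- arXiv:2602.21073 — 3 statements merged into one kernel-verified Lean document; each statement's English description precedes it below -/
import Mathlib

section
/- Let 𝓗 be a DFA built from a closed and sharp observation table for language L with prefix set P and suffix set S, where the representative map ⟦·⟧ sends each word w to the unique p ∈ P with the same table row as the frontier element reached by w, and membership of table cells agrees with L. Let w be a word with 𝓗(w) ≠ [w ∈ L]. Define A_i = [⟦w^i⟧·suffix_i(w) ∈ L] where w^i is the prefix of w of length i and suffix_i(w) the remaining suffix. Then A_0 ≠ A_{|w|}, and hence there exists an index i ∈ [0, |w|-1] with A_i ≠ A_{i+1} (a breaking point). -/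
lemma chain_neq {A : ℕ → Prop} {n : ℕ} (h : ¬ (A 0 ↔ A n)) :
    ∃ i < n, ¬ (A i ↔ A (i + 1)) := by
  induction n with
  | zero => exact absurd Iff.rfl h
  | succ n ih =>
    by_cases hn : A 0 ↔ A n
    · exact ⟨n, Nat.lt_succ_self n, fun h2 => h (hn.trans h2)⟩
    · obtain ⟨i, hi, hne⟩ := ih hn
      exact ⟨i, hi.trans (Nat.lt_succ_self n), hne⟩

/-- Breaking point existence for a counterexample to the hypothesis automaton.
Here `rep w` denotes the representative `⟦w⟧ ∈ P` of the state reached by `w`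
in the hypothesis DFA built from a sharp closed observation table for `L`:
`rep [] = []`, and the hypothesis accepts `w` iff `rep w ∈ L` (since `ε ∈ S`).
Given a counterexample `w` (the hypothesis disagrees with `L` on `w`), the
partial-computation predicates `A i = (rep (w.take i) ++ w.drop i ∈ L)` satisfy
`A 0 ≠ A |w|`, hence there is a breaking point `i < |w|` with `A i ≠ A (i+1)`. -/
theorem breaking_point_exists {α : Type*} (L : Set (List α))
    (rep : List α → List α) (hrepnil : rep [] = [])
    (w : List α)
    (hce : ¬ ((rep w ∈ L) ↔ (w ∈ L))) :
    ¬ ((rep (w.take 0) ++ w.drop 0 ∈ L) ↔ (rep (w.take w.length) ++ w.drop w.length ∈ L)) ∧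
      ∃ i < w.length,
        ¬ ((rep (w.take i) ++ w.drop i ∈ L) ↔
           (rep (w.take (i + 1)) ++ w.drop (i + 1) ∈ L)) := by
  have h0 : ¬ ((rep (w.take 0) ++ w.drop 0 ∈ L) ↔ (rep (w.take w.length) ++ w.drop w.length ∈ L)) := by
    simp only [List.take_zero, List.drop_zero, hrepnil, List.nil_append,
      List.take_length, List.drop_length, List.append_nil]
    exact fun h => hce (h.symm)
  exact ⟨h0, chain_neq (A := fun i => rep (w.take i) ++ w.drop i ∈ L) h0⟩
end

section
/- With the setup of a sharp closed observation table and a counterexample w to hypothesis 𝓗, if i is a breaking point (A_i ≠ A_{i+1} where A_k = [⟦w^k⟧·suffix_k(w) ∈ L]), then the suffix suffix_{i+1}(w) distinguishes the words ⟦w^i⟧·w[i] and ⟦w^{i+1}⟧ with respect to L, even though these two words have identical rows in the current table (the same value on every suffix in S). -/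
/-- If `i` is a breaking point for counterexample `w` (the partial-computation
predicates `A i = (rep (w.take i) ++ w.drop i ∈ L)` differ at `i` and `i+1`),
then the suffix `w.drop (i+1)` distinguishes the words `⟦w^i⟧·w[i]` and
`⟦w^{i+1}⟧` with respect to `L`, even though these two words have identical
rows in the current table (they agree on every suffix in `S`); in particular
the distinguishing suffix is not already in `S`. -/
theorem breaking_point_distinguishes {α : Type*} (L : Set (List α))
    (S : Set (List α)) (rep : List α → List α)
    (w : List α) (i : ℕ) (hi : i < w.length)
    (hbp : ¬ ((rep (w.take i) ++ w.drop i ∈ L) ↔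
              (rep (w.take (i + 1)) ++ w.drop (i + 1) ∈ L)))
    (hrow : ∀ s ∈ S,
      ((rep (w.take i) ++ [w[i]'hi]) ++ s ∈ L ↔ rep (w.take (i + 1)) ++ s ∈ L)) :
    (¬ (((rep (w.take i) ++ [w[i]'hi]) ++ w.drop (i + 1) ∈ L) ↔
        (rep (w.take (i + 1)) ++ w.drop (i + 1) ∈ L))) ∧
      w.drop (i + 1) ∉ S := by
  have hdrop : w.drop i = w[i]'hi :: w.drop (i + 1) := List.drop_eq_getElem_cons hi
  have key : (rep (w.take i) ++ [w[i]'hi]) ++ w.drop (i + 1) = rep (w.take i) ++ w.drop i := by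
    rw [hdrop]; simp
  constructor
  · rw [key]; exact hbp
  · intro hS
    exact (key ▸ hbp) (hrow _ hS)
end

section
/- Satisfiability of the table encoding when a compatible target exists: let T be a language, P a finite prefix-closed set, S a finite suffix set, and suppose B ⊆ P is prefix-closed, contains ε, and for every p ∈ B and a ∈ Σ there exists q ∈ B with p·a ≡_T q, and distinct elements of B are ≡_T-inequivalent. Then the valuation m defined by m[b_p] = [p ∈ B], m[e_{p,a,p'}] = [p ∈ B ∧ p' = q_{pa}] (q_{pa} the chosen B-representative of pa), and m[x_w] = [w ∈ T] satisfies all clauses of 𝒞_{P,S}: basis, reachability, congruence, determinism, closedness, successor, sharpness, and all inductive-pair clauses valid for T. -/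
def NerodeEquiv {α : Type*} (T : Set (List α)) (u v : List α) : Prop :=
  ∀ s : List α, u ++ s ∈ T ↔ v ++ s ∈ T

/-- Satisfiability of the table encoding when a compatible target exists.
Given a target `T`, a basis `B ⊆ P` which is prefix-closed, contains `ε`,
whose elements are pairwise Nerode-inequivalent, and which is closed up to
`≡_T` (witnessed by the representative map `q` with `q p a = p ++ [a]`
whenever `p ++ [a] ∈ B`), the valuation `m` given by
`m[b_p] = (p ∈ B)`, `m[e_{p,a,p'}] = (p ∈ B ∧ p' = q p a)`, `m[x_w] = (w ∈ T)`
satisfies all clauses of `𝒞_{P,S}`: basis, reachability, congruence,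
determinism, closedness, successor, sharpness, and all inductive-pair clauses
valid for `T`. -/
theorem table_encoding_satisfiable {α : Type*}
    (T : Set (List α)) (P S B : Set (List α))
    (hBP : B ⊆ P)
    (hεB : ([] : List α) ∈ B)
    (hBpref : ∀ (p : List α) (a : α), p ++ [a] ∈ B → p ∈ B)
    (q : List α → α → List α)
    (hq : ∀ p ∈ B, ∀ a : α, q p a ∈ B ∧ NerodeEquiv T (p ++ [a]) (q p a))
    (hqid : ∀ p ∈ B, ∀ a : α, p ++ [a] ∈ B → q p a = p ++ [a])
    (hsharp : ∀ p ∈ B, ∀ p' ∈ B, p ≠ p' → ¬ NerodeEquiv T p p') :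
    -- basis_ε
    (([] : List α) ∈ B) ∧
    -- basis_{pa} : b_{pa} → b_p
    (∀ (p : List α) (a : α), p ++ [a] ∈ B → p ∈ B) ∧
    -- reach_{pa} : b_{pa} → e_{p,a,pa}
    (∀ (p : List α) (a : α), p ++ [a] ∈ B → (p ∈ B ∧ p ++ [a] = q p a)) ∧
    -- cong_{p,a,p',s} : e_{p,a,p'} → (ν(p·a·s) ↔ ν(p'·s))
    (∀ (p : List α) (a : α) (p' : List α), ∀ s ∈ S,
        (p ∈ B ∧ p' = q p a) → ((p ++ [a] ++ s ∈ T) ↔ (p' ++ s ∈ T))) ∧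
    -- det_{p,a,p₁,p₂} : e_{p,a,p₁} → ¬ e_{p,a,p₂}  (p₁ ≠ p₂)
    (∀ (p : List α) (a : α) (p₁ p₂ : List α), p₁ ≠ p₂ →
        (p ∈ B ∧ p₁ = q p a) → ¬ (p ∈ B ∧ p₂ = q p a)) ∧
    -- clos_{p,a} : b_p → ⋁_{p' ∈ P} e_{p,a,p'}
    (∀ p ∈ B, ∀ a : α, ∃ p' ∈ P, p ∈ B ∧ p' = q p a) ∧
    -- succ_{p,a,p'} : e_{p,a,p'} → b_{p'}
    (∀ (p : List α) (a : α) (p' : List α), (p ∈ B ∧ p' = q p a) → p' ∈ B) ∧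
    -- sharp_{p,a,p'} : b_{pa} ∧ b_{p'} → ¬ e_{p,a,p'}  (p' ≠ pa)
    (∀ (p : List α) (a : α) (p' : List α), p ++ [a] ∈ B → p' ∈ B →
        p' ≠ p ++ [a] → ¬ (p ∈ B ∧ p' = q p a)) ∧
    -- ind_{w₁,w₂} : x_{w₁} → x_{w₂} for pairs valid for T
    (∀ w₁ w₂ : List α, (w₁ ∈ T → w₂ ∈ T) → (w₁ ∈ T → w₂ ∈ T)) := by
  refine ⟨hεB, hBpref, ?_, ?_, ?_, ?_, ?_, ?_, fun _ _ h => h⟩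
  · exact fun p a h => ⟨hBpref p a h, (hqid p (hBpref p a h) a h).symm⟩
  · rintro p a p' s _ ⟨hp, rfl⟩
    exact (hq p hp a).2 s
  · rintro p a p₁ p₂ hne ⟨hp, rfl⟩ ⟨_, h⟩
    exact hne h.symm
  · exact fun p hp a => ⟨q p a, hBP (hq p hp a).1, hp, rfl⟩
  · rintro p a p' ⟨hp, rfl⟩
    exact (hq p hp a).1
  · rintro p a p' hpa hp' hne ⟨hp, rfl⟩
    exact hne (hqid p hp a hpa)
end
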